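/- Let A be the localization of the polynomial ring ℤ[β][y_1,y_2,y_3,...] at the multiplicative set generated by {1+βy_i : i ≥ 1}. Then the A-span of the double Grothendieck polynomials {𝔊_w(x;y) : w ∈ S_∞} inside the polynomial ring A[x_1,x_2,x_3,...] is all of A[x_1,x_2,x_3,...]; that is, every polynomial in the x-variables with coefficients in A is a finite A-linear combination of double Grothendieck polynomials. -/

import Mathlib

open scoped Classical

noncomputable section

/-! ## Signed permutations -/

/-- We model signed permutations (and ordinary permutations of the positive
integers) inside the group `Equiv.Perm ℤ`. -/
abbrev SPerm := Equiv.Perm ℤ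

/-- `w` is a signed permutation: `w(-i) = -w(i)` and finite support. -/
def IsSgn (w : SPerm) : Prop :=
  (∀ i : ℤ, w (-i) = -(w i)) ∧ Set.Finite {i : ℤ | w i ≠ i}

/-- The classical types B, C, D. -/
inductive XType | B | C | D
deriving DecidableEq

/-- `ℓ0(w)`: the number of positive `i` with `w i < 0`. -/
def negCount (w : SPerm) : ℕ := Set.ncard {i : ℤ | 0 < i ∧ w i < 0}

/-- Membership in `W^X_∞`. -/
def IsW : XType → SPerm → Prop
  | XType.B, w => IsSgn w
  | XType.C, w => IsSgn w
  | XType.D, w => IsSgn w ∧ Even (negCount w)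

/-- Membership in `W^X_n`: an element of `W^X_∞` fixing every `i` with `|i| > n`. -/
def IsWn (X : XType) (n : ℕ) (w : SPerm) : Prop :=
  IsW X w ∧ ∀ i : ℤ, (n : ℤ) < |i| → w i = i

/-- `inv(w)`: the number of pairs `(i,j)` of integers with `i < j` and `w i > w j`. -/
def invP (w : SPerm) : ℕ := Set.ncard {p : ℤ × ℤ | p.1 < p.2 ∧ w p.2 < w p.1}

/-- The Coxeter length functions `ℓ^B = ℓ^C = (inv + ℓ0)/2`, `ℓ^D = (inv - ℓ0)/2`. -/
def lenX : XType → SPerm → ℕ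
  | XType.B, w => (invP w + negCount w) / 2
  | XType.C, w => (invP w + negCount w) / 2
  | XType.D, w => (invP w - negCount w) / 2

/-- The element `t_{i,j}` exchanging `i ↔ j` and `-i ↔ -j`; in particular
`t_{0,k}` exchanges `-k ↔ k`, and `t_{j,j} = t_{-j,j} = 1`. -/
def tt (i j : ℤ) : SPerm :=
  if i = 0 then Equiv.swap (-j) j
  else if j = 0 then Equiv.swap (-i) i
  else if i = j ∨ i = -j then 1
  else Equiv.swap i j * Equiv.swap (-i) (-j)

/-- The simple generators: `st 0 = t_{0,1}`, `st (-1) = t_{-1,2}`,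
`st i = t_{i,i+1}` for `i ≥ 1`. -/
def st (a : ℤ) : SPerm := if a = -1 then tt (-1) 2 else tt a (a + 1)

/-- One step of the Demazure product: multiply by `st a` if this increases
length by one, else do nothing. -/
def demStep (X : XType) (w : SPerm) (a : ℤ) : SPerm :=
  if lenX X (w * st a) = lenX X w + 1 then w * st a else w

/-- Demazure product of `w` with the word `l` of simple generators. -/
def demFold (X : XType) (w : SPerm) (l : List ℤ) : SPerm := l.foldl (demStep X) w

/-- Letters allowed in Hecke words of type `X`. -/
def allowedLetter : XType → ℤ → Prop
  | XType.B, a => 0 ≤ a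
  | XType.C, a => 0 ≤ a
  | XType.D, a => a = -1 ∨ 1 ≤ a

/-- `l ∈ H^X(w)`: a Hecke word for `w` of type `X`. -/
def HeckeWord (X : XType) (w : SPerm) (l : List ℤ) : Prop :=
  (∀ a ∈ l, allowedLetter X a) ∧ demFold X 1 l = w

/-- `o^X(a)`. -/
def oX : XType → List ℤ → ℕ
  | XType.B, l => l.count 0
  | XType.C, _ => 0
  | XType.D, l => l.count (-1) + l.count 1

/-- `b ∈ C^X(a)`: a compatible sequence for the word `a`. -/
def CompatX (X : XType) (a : List ℤ) (b : List ℕ) : Prop :=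
  b.length = a.length ∧ (∀ x ∈ b, 0 < x) ∧ b.Pairwise (· ≤ ·) ∧
  (∀ i : ℕ, 0 < i → i + 1 < a.length →
    |a.getD (i-1) 0| ≤ |a.getD i 0| → |a.getD (i+1) 0| ≤ |a.getD i 0| →
    b.getD (i-1) 0 < b.getD (i+1) 0) ∧
  (X = XType.B → ∀ i : ℕ, i + 1 < a.length → a.getD i 0 = 0 → a.getD (i+1) 0 = 0 →
    b.getD i 0 < b.getD (i+1) 0) ∧
  (X = XType.D → ∀ i : ℕ, i + 1 < a.length →
    a.getD i 0 = a.getD (i+1) 0 → (a.getD i 0 = -1 ∨ a.getD i 0 = 1) →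
    b.getD i 0 < b.getD (i+1) 0)

/-- `γ(a,b)`: the number of `i` with `a_i = a_{i+1}` and `b_i = b_{i+1}`. -/
def gammaC (a : List ℤ) (b : List ℕ) : ℕ :=
  (List.range (a.length - 1)).countP
    (fun i => decide (a.getD i 0 = a.getD (i+1) 0 ∧ b.getD i 0 = b.getD (i+1) 0))

/-- `ℤ[β]`, with `β = Polynomial.X`. -/
abbrev PolyB := Polynomial ℤ

/-- The K-Stanley symmetric function `F^X_w(z) ∈ ℤ[β]⟦z_1,z_2,...⟧`
(the variable `z_i` has index `i ≥ 1`; index `0` is unused), defined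
coefficientwise: the coefficient of a monomial is the (finite) sum of the
contributions `2^{|b|-γ(a,b)-o^X(a)} β^{ℓ(a)-ℓ^X(w)}` over all pairs of a
Hecke word `a ∈ H^X(w)` and compatible sequence `b ∈ C^X(a)` with `z_b`
equal to the monomial. -/
def KSF (X : XType) (w : SPerm) : MvPowerSeries ℕ PolyB :=
  fun d => ∑ᶠ (p : List ℤ × List ℕ)
    (_ : HeckeWord X w p.1 ∧ CompatX X p.1 p.2 ∧ ∀ k : ℕ, d k = p.2.count k),
    (2 : PolyB) ^ (p.2.dedup.length - gammaC p.1 p.2 - oX X p.1) *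
      Polynomial.X ^ (p.1.length - lenX X w)

/-- A signed permutation is Grassmannian if `w(1) < w(2) < ⋯`. -/
def IsGrassmannian (w : SPerm) : Prop := ∀ i : ℤ, 0 < i → w i < w (i + 1)

/-- The descent set `Des(w) = {i > 0 : w(i) > w(i+1)}` (as a set of naturals). -/
def DesSet (w : SPerm) : Set ℕ := {i : ℕ | 0 < i ∧ w ((i : ℤ) + 1) < w (i : ℤ)}

/-- The last descent `LD(w) = max({0} ∪ Des(w))`. -/
def LD (w : SPerm) : ℕ := sSup (DesSet w)

/-- The partial order `≺_LD`. -/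
def precLD (u w : SPerm) : Prop :=
  LD u < LD w ∨ (0 < LD u ∧ LD u = LD w ∧ u (LD u : ℤ) < w (LD w : ℤ))

/-- `IncSteps f u ts` : successive right multiplications of `u` by the
elements of `ts` each increase `f` by exactly one. -/
def IncSteps (f : SPerm → ℕ) : SPerm → List SPerm → Prop
  | _, [] => True
  | u, t :: ts => f (u * t) = f u + 1 ∧ IncSteps f (u * t) ts

/-! ## Strict partitions and K-theoretic Schur P- and Q-functions -/

section

/-- A strict partition, encoded as a strictly decreasing list of positive
integers. -/
def StrictPart (l : List ℕ) : Prop := l.Pairwise (· > ·) ∧ ∀ x ∈ l, 0 < x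

/-- A partition (weakly decreasing list of positive integers). -/
def Partn (l : List ℕ) : Prop := l.Pairwise (· ≥ ·) ∧ ∀ x ∈ l, 0 < x

/-- Membership of the (1-based) box `p = (i,j)` in the shifted diagram `SD_l`. -/
def inSD (l : List ℕ) (p : ℕ × ℕ) : Prop :=
  1 ≤ p.1 ∧ p.1 ≤ l.length ∧ p.1 ≤ p.2 ∧ p.2 < p.1 + l.getD (p.1 - 1) 0

/-- `mu ⊆ lam`, i.e. `SD_mu ⊆ SD_lam`. -/
def subShape (mu lam : List ℕ) : Prop := ∀ p, inSD mu p → inSD lam p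

/-- Membership in the skew shifted diagram `SD_{lam/mu}`. -/
def inSkew (lam mu : List ℕ) (p : ℕ × ℕ) : Prop := inSD lam p ∧ ¬ inSD mu p

/-- A set-valued shifted tableau of shape `lam/mu`:  a finite nonempty set of
letters in each box of the skew shape, the empty set elsewhere.  The primed
alphabet `1' < 1 < 2' < 2 < ⋯` is encoded in `ℕ` by `k ↦ 2k` and `k' ↦ 2k-1`
(so primed letters are odd codes, and the order on codes is the alphabet
order). -/
def IsSVT (lam mu : List ℕ) (T : ℕ × ℕ → Finset ℕ) : Prop :=
  (∀ p, (T p).Nonempty ↔ inSkew lam mu p) ∧ (∀ p, ∀ v ∈ T p, 0 < v)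

/-- Semistandardness of a set-valued shifted tableau. -/
def IsSSVT (lam mu : List ℕ) (T : ℕ × ℕ → Finset ℕ) : Prop :=
  IsSVT lam mu T ∧
  (∀ i j : ℕ, inSkew lam mu (i, j) → inSkew lam mu (i, j+1) →
    (∀ u ∈ T (i, j), ∀ v ∈ T (i, j+1), u ≤ v) ∧
    (∀ v ∈ T (i, j), v ∈ T (i, j+1) → Even v)) ∧
  (∀ i j : ℕ, inSkew lam mu (i, j) → inSkew lam mu (i+1, j) →
    (∀ u ∈ T (i, j), ∀ v ∈ T (i+1, j), u ≤ v) ∧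
    (∀ v ∈ T (i, j), v ∈ T (i+1, j) → Odd v))

/-- `|T|`: total number of letters in `T`. -/
def tabSize (T : ℕ × ℕ → Finset ℕ) : ℕ := ∑ᶠ p : ℕ × ℕ, (T p).card

/-- The exponent of `z_k` in `z^T`: the number of boxes containing the letter
`k` (code `2k`) plus the number containing `k'` (code `2k-1`). -/
def tabWt (T : ℕ × ℕ → Finset ℕ) (k : ℕ) : ℕ :=
  Set.ncard {p : ℕ × ℕ | 2 * k ∈ T p} + Set.ncard {p : ℕ × ℕ | 2 * k - 1 ∈ T p}

/-- The K-theoretic Schur P-function `GP_{lam/mu}(z) ∈ ℤ[β]⟦z_1,z_2,...⟧`,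
defined coefficientwise as a tableau generating function. -/
def GPs (lam mu : List ℕ) : MvPowerSeries ℕ PolyB :=
  fun d => ∑ᶠ (T : ℕ × ℕ → Finset ℕ)
    (_ : IsSSVT lam mu T ∧
      (∀ i : ℕ, inSkew lam mu (i, i) → ∀ v ∈ T (i, i), Even v) ∧
      (∀ k : ℕ, d k = tabWt T k)),
    (Polynomial.X : PolyB) ^ (tabSize T - (lam.sum - mu.sum))

/-- The K-theoretic Schur Q-function `GQ_{lam/mu}(z) ∈ ℤ[β]⟦z_1,z_2,...⟧`. -/
def GQs (lam mu : List ℕ) : MvPowerSeries ℕ PolyB :=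
  fun d => ∑ᶠ (T : ℕ × ℕ → Finset ℕ)
    (_ : IsSSVT lam mu T ∧ (∀ k : ℕ, d k = tabWt T k)),
    (Polynomial.X : PolyB) ^ (tabSize T - (lam.sum - mu.sum))

end

/-! ## Type A: the symmetric group and double Grothendieck polynomials

We identify `S_∞` (permutations of the positive integers with finite support)
with the subgroup `W^A_∞` of signed permutations preserving the positive
integers; under this identification the Coxeter length of type A equals
`ℓ^B`, and the transposition `(i,j)` of positive integers corresponds to
`tt i j`. -/

section

/-- Membership in `S_∞ = W^A_∞`. -/
def IsAperm (w : SPerm) : Prop := IsSgn w ∧ ∀ i : ℤ, 0 < i → 0 < w i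

/-- The type A Coxeter length. -/
def lenA (w : SPerm) : ℕ := lenX XType.B w

/-- The polynomial ring `ℤ[β][x_1,x_2,...,y_1,y_2,...]`:  the variable
`Sum.inl i` is `x_i` and `Sum.inr i` is `y_i` (for `i ≥ 1`; index 0 unused). -/
abbrev MvP := MvPolynomial (ℕ ⊕ ℕ) PolyB

def xV (i : ℕ) : MvP := MvPolynomial.X (Sum.inl i)
def yV (i : ℕ) : MvP := MvPolynomial.X (Sum.inr i)
def βM : MvP := MvPolynomial.C Polynomial.X

/-- `w` is the reverse permutation `n ⋯ 3 2 1 ∈ S_n`. -/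
def IsRevA (n : ℕ) (w : SPerm) : Prop :=
  IsAperm w ∧ (∀ i : ℤ, 1 ≤ i → i ≤ (n : ℤ) → w i = (n : ℤ) + 1 - i) ∧
  (∀ i : ℤ, (n : ℤ) < i → w i = i)

/-- Exchange of the variables `x_i` and `x_{i+1}`. -/
def swapXvar (i : ℕ) (f : MvP) : MvP :=
  MvPolynomial.rename (Equiv.swap (Sum.inl i : ℕ ⊕ ℕ) (Sum.inl (i+1))) f

/-- `G` is the family of double Grothendieck polynomials `𝔊_w(x;y)`:
it takes the prescribed product value on each reverse permutation, and
satisfies the divided-difference recursion `𝔊_{w s_i} = π_i 𝔊_w` whenever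
`w(i) > w(i+1)` (stated multiplied through by `x_i - x_{i+1}`). -/
def GrothFamily (G : SPerm → MvP) : Prop :=
  (∀ n : ℕ, ∀ w : SPerm, IsRevA n w →
    G w = ∏ p ∈ Finset.filter
        (fun p : ℕ × ℕ => 1 ≤ p.1 ∧ 1 ≤ p.2 ∧ p.1 + p.2 ≤ n)
        (Finset.range (n+1) ×ˢ Finset.range (n+1)),
      (xV p.1 + yV p.2 + βM * xV p.1 * yV p.2)) ∧
  (∀ w : SPerm, IsAperm w → ∀ i : ℕ, 0 < i → w ((i : ℤ) + 1) < w (i : ℤ) →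
    (xV i - xV (i+1)) * G (w * st (i : ℤ)) =
      (1 + βM * xV (i+1)) * G w - (1 + βM * xV i) * swapXvar i (G w))

/-! ## Power series rings -/

/-- `ℤ[β]⟦z⟧`. -/
abbrev PS1 := MvPowerSeries ℕ PolyB
/-- `ℤ[β]⟦x;y⟧`: `Sum.inl i = x_i`, `Sum.inr i = y_i`. -/
abbrev PS2 := MvPowerSeries (ℕ ⊕ ℕ) PolyB
/-- `ℤ[β]⟦x;y;z⟧`: `Sum.inl i = x_i`, `Sum.inr (Sum.inl i) = y_i`,
`Sum.inr (Sum.inr i) = z_i`. -/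
abbrev PS3 := MvPowerSeries (ℕ ⊕ ℕ ⊕ ℕ) PolyB

/-- Renaming of variables of a formal power series along a (variable-to-
variable, injective) map `g`. -/
def renamePS {σ τ : Type} (g : σ → τ) (f : MvPowerSeries σ PolyB) :
    MvPowerSeries τ PolyB :=
  fun e => if h : ∃ d : σ →₀ ℕ, Finsupp.mapDomain g d = e then f h.choose else 0

/-- The substitution sending `z_{2i-1}` to `z_i` (first alphabet) and
`z_{2i}` to `z'_i` (second alphabet): evaluation at the disjoint union of two
alphabets. -/
def dblVar : ℕ → ℕ ⊕ ℕ := fun k => if k % 2 = 1 then Sum.inl ((k+1)/2) else Sum.inr (k/2)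

def toPS2 : MvP →+* PS2 := MvPolynomial.coeToMvPowerSeries.ringHom
def X2 (i : ℕ) : PS2 := MvPowerSeries.X (Sum.inl i)
def Y2 (i : ℕ) : PS2 := MvPowerSeries.X (Sum.inr i)
def βC2 : PS2 := @MvPowerSeries.C (ℕ ⊕ ℕ) PolyB _ Polynomial.X
/-- The inverse of `1 + β y_m` in `ℤ[β]⟦x;y⟧`. -/
def yInv2 (m : ℕ) : PS2 := MvPowerSeries.invOfUnit (1 + βC2 * Y2 m) 1

def X3 (i : ℕ) : PS3 := MvPowerSeries.X (Sum.inl i)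
def Y3 (i : ℕ) : PS3 := MvPowerSeries.X (Sum.inr (Sum.inl i))
def βC3 : PS3 := @MvPowerSeries.C (ℕ ⊕ ℕ ⊕ ℕ) PolyB _ Polynomial.X
/-- The inverse of `1 + β y_m` in `ℤ[β]⟦x;y;z⟧`. -/
def yInv3 (m : ℕ) : PS3 := MvPowerSeries.invOfUnit (1 + βC3 * Y3 m) 1

/-- `y_c` for `c : ℤ`, with the convention `y_{-m} = -y_m/(1+βy_m)`. -/
def y3Of (c : ℤ) : PS3 :=
  if 0 ≤ c then Y3 c.toNat else - Y3 (-c).toNat * yInv3 (-c).toNat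

/-- `(1 + β y_c)⁻¹` for `c : ℤ` (with the convention above for `c < 0`). -/
def oneByInv3 (c : ℤ) : PS3 := MvPowerSeries.invOfUnit (1 + βC3 * y3Of c) 1

/-! ## Kirillov–Naruse double Grothendieck polynomials -/

/-- `𝔊_σ(y)`: the `x`-variables replaced by `y`'s, the `y`-variables set
to `0`, inside `ℤ[β]⟦x;y;z⟧`. -/
def GyMap : MvP →+* PS3 :=
  MvPolynomial.eval₂Hom (@MvPowerSeries.C (ℕ ⊕ ℕ ⊕ ℕ) PolyB _)
    (fun s => match s with
      | Sum.inl i => Y3 i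
      | Sum.inr _ => 0)

/-- `𝔊_τ(x)`: the `y`-variables set to `0`, inside `ℤ[β]⟦x;y;z⟧`. -/
def GxMap : MvP →+* PS3 :=
  MvPolynomial.eval₂Hom (@MvPowerSeries.C (ℕ ⊕ ℕ ⊕ ℕ) PolyB _)
    (fun s => match s with
      | Sum.inl i => X3 i
      | Sum.inr _ => 0)

/-- Embedding of `ℤ[β]⟦z⟧` into `ℤ[β]⟦x;y;z⟧`. -/
def zEmb (f : PS1) : PS3 := renamePS (fun k => Sum.inr (Sum.inr k)) f

/-- `σ⁻¹ ∘ u ∘ τ = w` for the Demazure product of `W^X_∞` (computed by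
folding Hecke words for `u` and `τ` starting from `σ⁻¹`; the result does not
depend on the chosen words). -/
def DemTriple (X : XType) (sg u tu w : SPerm) : Prop :=
  ∃ lu lt : List ℤ, HeckeWord X u lu ∧ HeckeWord X tu lt ∧
    demFold X sg⁻¹ (lu ++ lt) = w

/-- The Kirillov–Naruse double Grothendieck polynomial
`𝔊^X_w(x;y;z) = Σ_{σ⁻¹∘u∘τ = w} β^{ℓ(σ)+ℓ^X(u)+ℓ(τ)-ℓ^X(w)} 𝔊_σ(y) F^X_u(z) 𝔊_τ(x)`,
defined coefficientwise (each coefficient receives finitely many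
contributions); it depends on a choice `G` of the family of type A double
Grothendieck polynomials. -/
def KN (X : XType) (G : SPerm → MvP) (w : SPerm) : PS3 :=
  fun e => ∑ᶠ (t : SPerm × SPerm × SPerm)
    (_ : IsAperm t.1 ∧ IsW X t.2.1 ∧ IsAperm t.2.2 ∧ DemTriple X t.1 t.2.1 t.2.2 w),
    @MvPowerSeries.coeff (ℕ ⊕ ℕ ⊕ ℕ) PolyB _ e
      (@MvPowerSeries.C (ℕ ⊕ ℕ ⊕ ℕ) PolyB _
          (Polynomial.X ^ (lenA t.1 + lenX X t.2.1 + lenA t.2.2 - lenX X w)) *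
        (GyMap (G t.1) * zEmb (KSF X t.2.1) * GxMap (G t.2.2)))

end

/-! ## Stable Grothendieck functions of type A -/

section

/-- A type A Hecke word: letters are positive, fold to `w` under the
Demazure product. -/
def HeckeWordA (w : SPerm) (l : List ℤ) : Prop :=
  (∀ a ∈ l, 0 < a) ∧ demFold XType.B 1 l = w

/-- `b ∈ C(a)`: compatible sequences of type A. -/
def CompatA (a : List ℤ) (b : List ℕ) : Prop :=
  b.length = a.length ∧ (∀ x ∈ b, 0 < x) ∧ b.Pairwise (· ≤ ·) ∧
  ∀ i : ℕ, i + 1 < a.length → a.getD i 0 ≤ a.getD (i+1) 0 →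
    b.getD i 0 < b.getD (i+1) 0

/-- The stable (symmetric) Grothendieck function `G_w(z)`. -/
def GA (w : SPerm) : PS1 :=
  fun d => ∑ᶠ (p : List ℤ × List ℕ)
    (_ : HeckeWordA w p.1 ∧ CompatA p.1 p.2 ∧ ∀ k : ℕ, d k = p.2.count k),
    (Polynomial.X : PolyB) ^ (p.1.length - lenA w)

/-- Demazure product condition `u ∘ v = w` in `S_∞`. -/
def DemPairA (u v w : SPerm) : Prop :=
  ∃ lv : List ℤ, HeckeWordA v lv ∧ demFold XType.B u lv = w

/-- `max({0} ∪ {i > 0 : u(i) ≠ i})`. -/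
def suppMax (u : SPerm) : ℕ := sSup {n : ℕ | 0 < n ∧ u (n : ℤ) ≠ (n : ℤ)}

end

/-! ## The coefficient ring 𝔸 (localization of ℤ[β][y] at the 1+βyᵢ) -/

section

/-- `ℤ[β][y_1,y_2,...]`. -/
abbrev Ry := MvPolynomial ℕ+ PolyB

/-- The multiplicative set generated by the `1 + β y_i`, `i ≥ 1`. -/
def Sy : Submonoid Ry :=
  Submonoid.closure
    (Set.range fun i : ℕ+ => (1 + MvPolynomial.C Polynomial.X * MvPolynomial.X i : Ry))

/-- The ring `𝔸`. -/
abbrev Aloc := Localization Sy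

/-- The polynomial ring `𝔸[x_1,x_2,...]`. -/
abbrev Ax := MvPolynomial ℕ+ Aloc

/-- The canonical map `ℤ[β][x;y] → 𝔸[x]`. -/
def toAx : MvP →+* Ax :=
  MvPolynomial.eval₂Hom
    ((MvPolynomial.C : Aloc →+* Ax).comp
      ((algebraMap Ry Aloc).comp (MvPolynomial.C : PolyB →+* Ry)))
    (fun s => match s with
      | Sum.inl i => if h : 0 < i then MvPolynomial.X (⟨i, h⟩ : ℕ+) else 0
      | Sum.inr i => if h : 0 < i then
          MvPolynomial.C (algebraMap Ry Aloc (MvPolynomial.X (⟨i, h⟩ : ℕ+))) else 0)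

/-- Homogeneity in `ℤ[β][y]` for the grading `deg β = -1`, `deg y_i = 1`. -/
def IsHomogRy (p : Ry) (d : ℤ) : Prop :=
  ∀ (m : ℕ+ →₀ ℕ) (a : ℕ), (MvPolynomial.coeff m p).coeff a ≠ 0 →
    (m.sum fun _ e => (e : ℤ)) - (a : ℤ) = d

/-- Homogeneity in `𝔸` of degree `d`: the element can be written with a
homogeneous numerator of degree `d` and a (degree zero) denominator in `Sy`. -/
def IsHomogA (x : Aloc) (d : ℤ) : Prop :=
  ∃ (p : Ry) (s : Sy), IsHomogRy p d ∧ IsHomogRy (s : Ry) 0 ∧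
    x * algebraMap Ry Aloc (s : Ry) = algebraMap Ry Aloc p

/-- The subring `𝔸^{(n)}` generated by `β`, by `y_1,…,y_{n-1}` and by the
inverses of `1+βy_1,…,1+βy_{n-1}`. -/
def AnSub (n : ℕ) : Subring Aloc :=
  Subring.closure
    ({algebraMap Ry Aloc (MvPolynomial.C Polynomial.X)} ∪
     {x | ∃ i : ℕ+, (i : ℕ) < n ∧ x = algebraMap Ry Aloc (MvPolynomial.X i)} ∪
     {x | ∃ i : ℕ+, (i : ℕ) < n ∧
        x * algebraMap Ry Aloc
          (1 + MvPolynomial.C Polynomial.X * MvPolynomial.X i : Ry) = 1})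

end

/-! ## Transition chains -/

section

/-- The list of reflections of a transition chain `γ = (δ; j_1 < ⋯ < j_r)`
with target column `k`: first (if `δ`) the reflection `t_{0,k}`, then the
reflections `t_{j_1,k}, …, t_{j_r,k}`. -/
def stepsR (k : ℕ) (γ : Bool × List ℤ) : List SPerm :=
  (if γ.1 then [tt 0 (k : ℤ)] else []) ++ γ.2.map (fun j => tt j (k : ℤ))

/-- Validity of the transition chain `γ = (δ; j_1 < ⋯ < j_r)` starting at
`w`, with target column `k`: `δ` only in type B, `j`'s increasing and `< k`,
`j_i ≠ -k`, `j_i ≠ 0` in type D, and each step increases `ℓ^X` by one. -/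
def chainValidR (X : XType) (w : SPerm) (k : ℕ) (γ : Bool × List ℤ) : Prop :=
  (γ.1 = true → X = XType.B) ∧ γ.2.Pairwise (· < ·) ∧
  (∀ j ∈ γ.2, j < (k : ℤ) ∧ j ≠ -(k : ℤ) ∧ (X = XType.D → j ≠ 0)) ∧
  IncSteps (lenX X) w (stepsR k γ)

/-- The endpoint of a chain. -/
def endR (w : SPerm) (k : ℕ) (γ : Bool × List ℤ) : SPerm := w * (stepsR k γ).prod

/-- The number of steps `δ + r` of a chain. -/
def lenR (γ : Bool × List ℤ) : ℕ := (if γ.1 then 1 else 0) + γ.2.length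

end

/-! ## Unimodal factorizations -/

section

/-- `b ∈ U(a)`: unimodal factorizations of the word `a`. -/
def UFact (a b : List ℤ) : Prop :=
  b.length = a.length ∧ (∀ x ∈ b, x ≠ 0) ∧
  b.Pairwise (fun m n => |m| < |n| ∨ (|m| = |n| ∧ m ≤ n)) ∧
  ∀ i : ℕ, i + 1 < b.length → b.getD i 0 = b.getD (i+1) 0 →
    (b.getD i 0 < 0 → |a.getD (i+1) 0| < |a.getD i 0|) ∧
    (0 < b.getD i 0 → |a.getD i 0| < |a.getD (i+1) 0|)

/-- `b ∈ U^X(a)`. -/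
def UFactX (X : XType) (a b : List ℤ) : Prop :=
  UFact a b ∧
  (X = XType.B → ∀ i : ℕ, i < b.length → a.getD i 0 = 0 → 0 < b.getD i 0) ∧
  (X = XType.D → ∀ i : ℕ, i < b.length →
    (a.getD i 0 = -1 ∨ a.getD i 0 = 1) → 0 < b.getD i 0)

end

/-! ## Reading words of skew shifted shapes -/

section

/-- The row-by-row reading word of the filling of `SD_{lam/mu}` placing
`j - i` in box `(i,j)`. -/
def aWord (lam mu : List ℕ) : List ℤ :=
  (List.range lam.length).flatMap (fun r =>
    (List.range (lam.getD r 0 - mu.getD r 0)).map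
      (fun s => ((mu.getD r 0 + s : ℕ) : ℤ)))

/-- The row-by-row reading word of the filling of `SD_{lam/mu}` placing
`j - i + 1` in each box `(i,j)` with `i ≠ j` and `(-1)^i` in each diagonal
box `(i,i)`. -/
def bWord (lam mu : List ℕ) : List ℤ :=
  (List.range lam.length).flatMap (fun r =>
    (List.range (lam.getD r 0 - mu.getD r 0)).map
      (fun s => if mu.getD r 0 + s = 0 then (-1 : ℤ) ^ (r + 1)
        else ((mu.getD r 0 + s : ℕ) : ℤ) + 1))

end

end

/-! The `𝔸`-span `W` of the `𝔊_w` contains `𝔊_{id} = 1`, so it is enough to show that `W` is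
closed under multiplication by every `x_s`.

`W` is stable under `π_q`: at a descent `π_q 𝔊_w = 𝔊_{w s_q}`, and at an ascent `𝔊_w` is itself
in the image of `π_q`, hence symmetric in `x_q, x_{q+1}`, so `π_q 𝔊_w = -β 𝔊_w`. By the twisted
Leibniz rules `x_q π_q f = π_q (x_{q+1} f) + (1 + β x_{q+1}) f` and
`x_{q+1} π_q f = π_q (x_q f) - (1 + β x_{q+1}) f`, the set of `f ∈ W` with
`x_1 f, …, x_N f ∈ W` is stable under `π_1, …, π_{N-1}`. Every `w ∈ S_N` is reached from the
reverse permutation `w₀` of `S_N` by such operators at descents, so it suffices to show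
`x_s 𝔊_{w₀} ∈ W` for `s ≤ N`.

Here `𝔊_{w₀} = ∏_{i+j ≤ N} (x_i ⊕ y_j)` is a staircase product, and `π_q` removes the last box
of row `q` from a product over a diagram whose rows `q` and `q + 1` otherwise agree. Removing
from the staircase of size `N + 1` the last box of every row but row `s`, top to bottom, shows
`𝔊_{w₀} · (x_s ⊕ y_{N+1-s}) ∈ W`. As `x_s ⊕ y_m = (1 + β y_m) x_s + y_m` and `1 + β y_m` is a
unit of `𝔸`, this gives `x_s 𝔊_{w₀} ∈ W`. -/

noncomputable section

-- Without this shortcut, synthesizing `CommRing Ax` exceeds the default `maxSynthPendingDepth`.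
local instance : CommRing Aloc := inferInstance

namespace GrothSpan

open MvPolynomial

section Permutations

lemma st_apply_of_pos {k : ℤ} (hk : 0 < k) (x : ℤ) :
    st k x = if x = k then k + 1 else if x = k + 1 then k
      else if x = -k then -k - 1 else if x = -k - 1 then -k else x := by
  have hk' : ¬(k = k + 1 ∨ k = -(k + 1)) := by omega
  rw [st, if_neg (by omega), tt, if_neg hk.ne', if_neg (by omega), if_neg hk',
    Equiv.Perm.mul_apply]
  simp only [Equiv.swap_apply_def]
  split_ifs <;> omega

lemma st_mul_self {k : ℤ} (hk : 0 < k) : st k * st k = 1 := by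
  ext x
  simp only [Equiv.Perm.mul_apply, Equiv.Perm.one_apply, st_apply_of_pos hk]
  split_ifs <;> omega

lemma isAperm_mul_st {v : SPerm} (hv : IsAperm v) {k : ℤ} (hk : 0 < k) :
    IsAperm (v * st k) := by
  obtain ⟨⟨hodd, hfin⟩, hpos⟩ := hv
  refine ⟨⟨fun i => ?_, ?_⟩, fun i hi => hpos _ ?_⟩
  · simp only [Equiv.Perm.mul_apply, st_apply_of_pos hk, ← hodd]
    congr 1
    split_ifs <;> omega
  · refine (hfin.union (Set.finite_Icc (-k - 1) (k + 1))).subset fun x hx => ?_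
    by_contra hout
    simp only [Set.mem_union, Set.mem_ofPred_eq, Set.mem_Icc, not_or] at hx hout
    rw [Equiv.Perm.mul_apply, st_apply_of_pos hk] at hx
    exact hout.1 (by split_ifs at hx <;> omega)
  · rw [st_apply_of_pos hk]
    split_ifs <;> omega

def revP (N : ℕ) : SPerm :=
  Function.Involutive.toPerm
    (fun x => if 1 ≤ x ∧ x ≤ N then N + 1 - x else if -N ≤ x ∧ x ≤ -1 then -N - 1 - x else x)
    (fun x => by dsimp only; split_ifs <;> omega)

lemma revP_apply (N : ℕ) (x : ℤ) :
    revP N x =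
      if 1 ≤ x ∧ x ≤ N then N + 1 - x else if -N ≤ x ∧ x ≤ -1 then -N - 1 - x else x :=
  rfl

lemma isRevA_revP (N : ℕ) : IsRevA N (revP N) := by
  refine ⟨⟨⟨fun i => ?_, (Set.finite_Icc (-(N : ℤ)) N).subset fun x hx => ?_⟩, fun i hi => ?_⟩,
    fun i h1 h2 => ?_, fun i hi => ?_⟩ <;>
  simp only [revP_apply, Set.mem_ofPred_eq, Set.mem_Icc] at * <;>
  split_ifs at * <;> omega

end Permutations

section Descents

/-- `v ∈ S_N`. -/
def IsApermN (N : ℕ) (v : SPerm) : Prop := IsAperm v ∧ ∀ x : ℤ, (N : ℤ) < |x| → v x = x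

lemma IsAperm.exists_isApermN {v : SPerm} (hv : IsAperm v) (M : ℕ) :
    ∃ N, M ≤ N ∧ IsApermN N v := by
  have hfin := hv.1.2
  refine ⟨max M (hfin.toFinset.sup Int.natAbs), le_max_left _ _, hv, fun x hx => ?_⟩
  by_contra hne
  have := Finset.le_sup (f := Int.natAbs) (hfin.mem_toFinset.mpr hne)
  rw [Int.abs_eq_natAbs] at hx
  omega

lemma IsApermN.mul_st {N : ℕ} {v : SPerm} (hv : IsApermN N v) {k : ℤ} (hk : 0 < k)
    (hkN : k + 1 ≤ N) : IsApermN N (v * st k) := by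
  refine ⟨isAperm_mul_st hv.1 hk, fun x hx => ?_⟩
  have hfix : st k x = x := by
    rw [lt_abs] at hx
    rw [st_apply_of_pos hk]
    split_ifs <;> omega
  rw [Equiv.Perm.mul_apply, hfix, hv.2 x hx]

def weight (N : ℕ) (v : SPerm) : ℤ := ∑ i ∈ Finset.Icc (1 : ℤ) N, i * v i

lemma weight_nonneg {N : ℕ} {v : SPerm} (hv : IsAperm v) : 0 ≤ weight N v :=
  Finset.sum_nonneg fun i hi => by
    have hi : 0 < i := by simp only [Finset.mem_Icc] at hi; omega
    exact (mul_pos hi (hv.2 i hi)).le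

lemma weight_mul_st_lt {N : ℕ} {v : SPerm} {k : ℤ} (hk : 0 < k) (hkN : k + 1 ≤ N)
    (hasc : v k < v (k + 1)) : weight N (v * st k) < weight N v := by
  have hmem : k ∈ Finset.Icc (1 : ℤ) N := by simp only [Finset.mem_Icc]; omega
  have hmem' : k + 1 ∈ (Finset.Icc (1 : ℤ) N).erase k := by
    simp only [Finset.mem_erase, Finset.mem_Icc]; omega
  have hsplit : ∀ w : SPerm, weight N w = k * w k + ((k + 1) * w (k + 1) +
      ∑ i ∈ ((Finset.Icc (1 : ℤ) N).erase k).erase (k + 1), i * w i) := fun w => by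
    rw [Finset.add_sum_erase _ (fun i => i * w i) hmem',
      Finset.add_sum_erase _ (fun i => i * w i) hmem, weight]
  have hrest : ∀ i ∈ ((Finset.Icc (1 : ℤ) N).erase k).erase (k + 1),
      i * (v * st k) i = i * v i := fun i hi => by
    simp only [Finset.mem_erase, Finset.mem_Icc] at hi
    rw [Equiv.Perm.mul_apply, st_apply_of_pos hk]
    split_ifs <;> omega
  have hk1 : (v * st k) k = v (k + 1) := by
    rw [Equiv.Perm.mul_apply, st_apply_of_pos hk, if_pos rfl]
  have hk2 : (v * st k) (k + 1) = v k := by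
    rw [Equiv.Perm.mul_apply, st_apply_of_pos hk, if_neg (by omega), if_pos rfl]
  rw [hsplit, hsplit v, Finset.sum_congr rfl hrest, hk1, hk2]
  nlinarith

lemma isRevA_of_forall_descent {N : ℕ} {v : SPerm} (hv : IsApermN N v)
    (hdesc : ∀ k : ℤ, 0 < k → k + 1 ≤ N → v (k + 1) < v k) : IsRevA N v := by
  have hle : ∀ x : ℤ, 1 ≤ x → x ≤ N → v x ≤ N := fun x h1 h2 => by
    by_contra! hgt
    have hpos := hv.1.2 x (by omega)
    have := v.injective (hv.2 (v x) (by rw [abs_of_pos hpos]; omega))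
    omega
  have hupper : ∀ i : ℤ, 1 ≤ i → i ≤ N → v i ≤ N + 1 - i := by
    intro i h1
    induction i, h1 using Int.leInduction with
    | base => intro h; have := hle 1 le_rfl h; omega
    | succ i h1 ih => intro h; have := hdesc i (by omega) h; have := ih (by omega); omega
  have hlower : ∀ i : ℤ, i ≤ N → 1 ≤ i → N + 1 - i ≤ v i := by
    intro i h1
    induction i, h1 using Int.leInductionDown with
    | base => intro h; have := hv.1.2 N (by omega); omega
    | pred i h1 ih =>
      intro h; have := hdesc (i - 1) (by omega) (by omega); have := ih (by omega)
      rw [sub_add_cancel] at *; omega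
  exact ⟨hv.1, fun i h1 h2 => le_antisymm (hupper i h1 h2) (hlower i h2 h1), fun i hi =>
    hv.2 i (by rw [abs_of_pos (by omega)]; exact hi)⟩

theorem IsApermN.induction_on_descent {N : ℕ} {P : SPerm → Prop}
    (hrev : ∀ w, IsRevA N w → P w)
    (hstep : ∀ u (k : ℤ), IsApermN N u → 0 < k → k + 1 ≤ N → u (k + 1) < u k → P u →
      P (u * st k))
    {v : SPerm} (hv : IsApermN N v) : P v := by
  induction hn : (weight N v).toNat using Nat.strong_induction_on generalizing v with
  | _ n ih =>
  by_cases hasc : ∃ k : ℤ, 0 < k ∧ k + 1 ≤ N ∧ v k < v (k + 1)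
  · obtain ⟨k, hk, hkN, hlt⟩ := hasc
    have hu := hv.mul_st hk hkN
    have hPu : P (v * st k) := ih _ (hn ▸ (Int.toNat_lt_toNat ((weight_nonneg hu.1).trans_lt
      (weight_mul_st_lt hk hkN hlt))).mpr (weight_mul_st_lt hk hkN hlt)) hu rfl
    have := hstep _ k hu hk hkN (by simpa [st_apply_of_pos hk] using hlt) hPu
    rwa [mul_assoc, st_mul_self hk, mul_one] at this
  · push Not at hasc
    exact hrev v (isRevA_of_forall_descent hv fun k hk hkN =>
      lt_of_le_of_ne (hasc k hk hkN) fun h => by have := v.injective h; omega)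

end Descents

section Algebra

lemma Sy_le_nonZeroDivisors : Sy ≤ nonZeroDivisors Ry := by
  rw [Sy, Submonoid.closure_le]
  rintro _ ⟨i, rfl⟩
  refine mem_nonZeroDivisors_of_ne_zero fun h => ?_
  simpa [coeff_X] using congrArg (coeff 0) h

instance : IsDomain Aloc := IsLocalization.isDomain_localization Sy_le_nonZeroDivisors

def sw (q : ℕ+) : Ax →ₐ[Aloc] Ax := rename (Equiv.swap q (q + 1))

lemma sw_X_self (q : ℕ+) : sw q (X q) = X (q + 1) := by simp [sw]

lemma sw_X_succ (q : ℕ+) : sw q (X (q + 1)) = X q := by simp [sw]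

lemma sw_X_of_ne {q m : ℕ+} (h1 : m ≠ q) (h2 : m ≠ q + 1) : sw q (X m) = X m := by
  simp [sw, Equiv.swap_apply_of_ne_of_ne h1 h2]

lemma sw_sw (q : ℕ+) (f : Ax) : sw q (sw q f) = f := by
  simp only [sw, rename_rename, Function.comp_def, Equiv.swap_apply_self]
  exact rename_id_apply f

lemma toAx_X_inl (q : ℕ+) : toAx (X (Sum.inl (q : ℕ))) = X q := by
  simp only [toAx, eval₂Hom_X', q.pos, ↓reduceDIte]
  rfl

lemma toAx_xV (q : ℕ+) : toAx (xV q) = X q := toAx_X_inl q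

lemma toAx_xV_succ (q : ℕ+) : toAx (xV ((q : ℕ) + 1)) = X (q + 1) := toAx_xV (q + 1)

lemma sw_toAx_βM (q : ℕ+) : sw q (toAx βM) = toAx βM := by
  simp [toAx, βM, sw]

lemma toAx_swapXvar (q : ℕ+) (f : MvP) : toAx (swapXvar q f) = sw q (toAx f) := by
  suffices h : toAx.comp (rename (Equiv.swap (Sum.inl (q : ℕ)) (Sum.inl ((q : ℕ) + 1)) :
      ℕ ⊕ ℕ → ℕ ⊕ ℕ)).toRingHom = (sw q).toRingHom.comp toAx from DFunLike.congr_fun h f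
  refine ringHom_ext (fun a => by simp [toAx, sw]) fun i => ?_
  rcases i with m | m
  · rcases Nat.eq_zero_or_pos m with rfl | hm
    · simp [toAx, Equiv.swap_apply_def, q.pos.ne]
    · lift m to ℕ+ using hm
      have hinj : Function.Injective (fun p : ℕ+ => (Sum.inl (p : ℕ) : ℕ ⊕ ℕ)) :=
        Sum.inl_injective.comp PNat.coe_injective
      simp only [AlgHom.toRingHom_eq_coe, RingHom.comp_apply, RingHom.coe_coe, rename_X]
      rw [show (q : ℕ) + 1 = ((q + 1 : ℕ+) : ℕ) from rfl, hinj.swap_apply q (q + 1) m]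
      rw [toAx_X_inl, toAx_X_inl, sw, rename_X]
  · rw [AlgHom.toRingHom_eq_coe, RingHom.comp_apply, RingHom.coe_coe, rename_X,
      Equiv.swap_apply_of_ne_of_ne (by simp) (by simp)]
    rcases Nat.eq_zero_or_pos m with rfl | hm
    · simp [toAx]
    · lift m to ℕ+ using hm
      simp [toAx, sw]

lemma toAx_βM : toAx βM = C (algebraMap Ry Aloc (C Polynomial.X)) := by
  simp [toAx, βM]

lemma toAx_yV (m : ℕ+) : toAx (yV m) = C (algebraMap Ry Aloc (X m)) := by
  simp only [toAx, yV, eval₂Hom_X', m.pos, ↓reduceDIte]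
  rfl

lemma C_mul_mem {M : Submodule Aloc Ax} (a : Aloc) {f : Ax} (hf : f ∈ M) : C a * f ∈ M := by
  rw [← smul_eq_C_mul]
  exact M.smul_mem a hf

lemma X_sub_X_succ_ne_zero (q : ℕ+) : (X q - X (q + 1) : Ax) ≠ 0 :=
  sub_ne_zero.mpr fun h => by simpa using congrArg PNat.val (X_injective h)

end Algebra

section Demazure

/-- `g = π_q f`, cleared of the denominator `x_q - x_{q+1}`. -/
def IsDemazure (q : ℕ+) (f g : Ax) : Prop :=
  (X q - X (q + 1)) * g = (1 + toAx βM * X (q + 1)) * f - (1 + toAx βM * X q) * sw q f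

lemma isDemazure_toAx {q : ℕ+} {f g : MvP}
    (h : (xV q - xV (q + 1)) * g = (1 + βM * xV (q + 1)) * f - (1 + βM * xV q) * swapXvar q f) :
    IsDemazure q (toAx f) (toAx g) := by
  have := congrArg toAx h
  simp only [map_mul, map_sub, map_add, map_one, toAx_xV, toAx_xV_succ, toAx_swapXvar] at this
  exact this

namespace IsDemazure

variable {q : ℕ+} {f g f' g' : Ax}

lemma unique (h : IsDemazure q f g) (h' : IsDemazure q f g') : g = g' :=
  mul_left_cancel₀ (X_sub_X_succ_ne_zero q) (h.trans h'.symm)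

lemma add (h : IsDemazure q f g) (h' : IsDemazure q f' g') : IsDemazure q (f + f') (g + g') := by
  unfold IsDemazure at *
  rw [map_add]
  linear_combination h + h'

lemma smul (a : Aloc) (h : IsDemazure q f g) : IsDemazure q (a • f) (a • g) := by
  unfold IsDemazure at *
  rw [map_smul, smul_eq_C_mul, smul_eq_C_mul, smul_eq_C_mul]
  linear_combination C a * h

lemma mul_left {m : Ax} (hm : sw q m = m) (h : IsDemazure q f g) :
    IsDemazure q (m * f) (m * g) := by
  unfold IsDemazure at *
  rw [map_mul, hm]
  linear_combination m * h

lemma X_mul (h : IsDemazure q f g) :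
    IsDemazure q (X q * f) (X (q + 1) * g + (1 + toAx βM * X (q + 1)) * f) := by
  unfold IsDemazure at *
  rw [map_mul, sw_X_self]
  linear_combination X (q + 1) * h

lemma X_succ_mul (h : IsDemazure q f g) :
    IsDemazure q (X (q + 1) * f) (X q * g - (1 + toAx βM * X (q + 1)) * f) := by
  unfold IsDemazure at *
  rw [map_mul, sw_X_succ]
  linear_combination X q * h

lemma sw_eq (h : IsDemazure q f g) : sw q g = g := by
  unfold IsDemazure at h
  have hs := congrArg (sw q) h
  simp only [map_mul, map_sub, map_add, map_one, sw_X_self, sw_X_succ, sw_toAx_βM, sw_sw] at hs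
  exact mul_left_cancel₀ (X_sub_X_succ_ne_zero q) (by linear_combination -hs - h)

lemma of_sw_eq (h : sw q f = f) : IsDemazure q f (-(toAx βM * f)) := by
  unfold IsDemazure
  rw [h]
  ring

end IsDemazure

end Demazure

section Staircase

def boxFactor (p : ℕ × ℕ) : MvP := xV p.1 + yV p.2 + βM * xV p.1 * yV p.2

def staircase (n : ℕ) : Finset (ℕ × ℕ) :=
  (Finset.range (n + 1) ×ˢ Finset.range (n + 1)).filter
    fun p => 1 ≤ p.1 ∧ 1 ≤ p.2 ∧ p.1 + p.2 ≤ n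

lemma mem_staircase {n : ℕ} {p : ℕ × ℕ} :
    p ∈ staircase n ↔ 1 ≤ p.1 ∧ 1 ≤ p.2 ∧ p.1 + p.2 ≤ n := by
  simp only [staircase, Finset.mem_filter, Finset.mem_product, Finset.mem_range]
  omega

lemma swapXvar_boxFactor (q : ℕ) (p : ℕ × ℕ) :
    swapXvar q (boxFactor p) = boxFactor (Equiv.swap q (q + 1) p.1, p.2) := by
  simp [swapXvar, boxFactor, xV, yV, βM, Sum.inl_injective.swap_apply,
    Equiv.swap_apply_of_ne_of_ne]

lemma isDemazure_prod_boxFactor {q : ℕ+} {E : Finset (ℕ × ℕ)} {c : ℕ}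
    (hE : ∀ i j, (Equiv.swap (q : ℕ) (q + 1) i, j) ∈ E ↔ (i, j) ∈ E) (hc : ((q : ℕ), c) ∉ E) :
    IsDemazure q (toAx (∏ p ∈ insert ((q : ℕ), c) E, boxFactor p))
      (toAx (∏ p ∈ E, boxFactor p)) := by
  apply isDemazure_toAx
  have hsym : swapXvar q (∏ p ∈ E, boxFactor p) = ∏ p ∈ E, boxFactor p := by
    unfold swapXvar
    rw [map_prod]
    exact Finset.prod_equiv ((Equiv.swap (q : ℕ) (q + 1)).prodCongr (Equiv.refl ℕ))
      (fun p => (hE p.1 p.2).symm) fun p _ => swapXvar_boxFactor q p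
  rw [Finset.prod_insert hc, swapXvar, map_mul, ← swapXvar, ← swapXvar, hsym,
    swapXvar_boxFactor, Equiv.swap_apply_left]
  -- `(1 + β x_{q+1}) (x_q ⊕ y_c) - (1 + β x_q) (x_{q+1} ⊕ y_c) = x_q - x_{q+1}`
  simp only [boxFactor]
  ring

def trimmedStaircase (N : ℕ) (T : Finset ℕ) : Finset (ℕ × ℕ) :=
  (staircase (N + 1)).filter fun p => ¬(p.1 ∈ T ∧ p.1 + p.2 = N + 1)

lemma mem_trimmedStaircase {N : ℕ} {T : Finset ℕ} {p : ℕ × ℕ} :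
    p ∈ trimmedStaircase N T ↔
      1 ≤ p.1 ∧ 1 ≤ p.2 ∧ p.1 + p.2 ≤ N + 1 ∧ ¬(p.1 ∈ T ∧ p.1 + p.2 = N + 1) := by
  rw [trimmedStaircase, Finset.mem_filter, mem_staircase, and_assoc, and_assoc]

lemma trimmedStaircase_eq_insert {N a : ℕ} {T : Finset ℕ} (ha : 1 ≤ a) (haN : a ≤ N)
    (haT : a ∉ T) :
    trimmedStaircase N T = insert (a, N + 1 - a) (trimmedStaircase N (insert a T)) := by
  ext ⟨i, j⟩
  simp only [Finset.mem_insert, mem_trimmedStaircase, Prod.mk.injEq]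
  by_cases hi : i = a
  · simp only [hi, haT, true_or, true_and, false_and, not_false_eq_true, and_true]
    omega
  · simp only [hi, false_or, false_and]

lemma notMem_trimmedStaircase_insert (N a : ℕ) (T : Finset ℕ) :
    (a, N + 1 - a) ∉ trimmedStaircase N (insert a T) := by
  simp only [mem_trimmedStaircase, Finset.mem_insert, true_or, true_and]
  omega

lemma swap_mem_trimmedStaircase_insert_iff {N a : ℕ} {T : Finset ℕ} (ha : 1 ≤ a)
    (haT : a + 1 ∉ T) (i j : ℕ) :
    (Equiv.swap a (a + 1) i, j) ∈ trimmedStaircase N (insert a T) ↔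
      (i, j) ∈ trimmedStaircase N (insert a T) := by
  simp only [mem_trimmedStaircase, Finset.mem_insert, Equiv.swap_apply_def]
  split_ifs with h1 h2
  · subst h1
    simp only [haT, true_or, true_and, or_false, Nat.succ_ne_self, false_and,
      not_false_eq_true, and_true]
    omega
  · subst h2
    simp only [haT, true_or, true_and, or_false, Nat.succ_ne_self, false_and,
      not_false_eq_true, and_true]
    omega
  · rfl

lemma trimmedStaircase_empty (N : ℕ) : trimmedStaircase N ∅ = staircase (N + 1) := by
  simp [trimmedStaircase]

lemma trimmedStaircase_erase {N s : ℕ} (hs : 1 ≤ s) (hsN : s ≤ N) :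
    trimmedStaircase N ((Finset.Icc 1 N).erase s) = insert (s, N + 1 - s) (staircase N) := by
  ext ⟨i, j⟩
  simp only [mem_trimmedStaircase, Finset.mem_insert, mem_staircase, Finset.mem_erase,
    Finset.mem_Icc, Prod.mk.injEq]
  omega

end Staircase

section Span

def grothSpan (G : SPerm → MvP) : Submodule Aloc Ax :=
  Submodule.span Aloc {P : Ax | ∃ w : SPerm, IsAperm w ∧ P = toAx (G w)}

variable {G : SPerm → MvP}

lemma toAx_mem_grothSpan {w : SPerm} (hw : IsAperm w) : toAx (G w) ∈ grothSpan G :=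
  Submodule.subset_span ⟨w, hw, rfl⟩

end Span

end GrothSpan

open GrothSpan MvPolynomial

namespace GrothFamily

variable {G : SPerm → MvP}

lemma isDemazure (hG : GrothFamily G) {u : SPerm} (hu : IsAperm u) (q : ℕ+)
    (hdesc : u (((q : ℕ) : ℤ) + 1) < u ((q : ℕ) : ℤ)) :
    IsDemazure q (toAx (G u)) (toAx (G (u * st ((q : ℕ) : ℤ)))) :=
  isDemazure_toAx (hG.2 u hu q q.pos hdesc)

lemma exists_isDemazure (hG : GrothFamily G) (q : ℕ+) {f : Ax} (hf : f ∈ grothSpan G) :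
    ∃ g ∈ grothSpan G, IsDemazure q f g := by
  induction hf using Submodule.span_induction with
  | mem x hx =>
    obtain ⟨u, hu, rfl⟩ := hx
    have hq : (0 : ℤ) < (q : ℕ) := by exact_mod_cast q.pos
    rcases lt_or_gt_of_ne (u.injective.ne (show ((q : ℕ) : ℤ) + 1 ≠ (q : ℕ) by omega))
      with hdesc | hasc
    · exact ⟨_, toAx_mem_grothSpan (isAperm_mul_st hu hq), hG.isDemazure hu q hdesc⟩
    · have hdesc : (u * st (q : ℕ)) (((q : ℕ) : ℤ) + 1) < (u * st (q : ℕ)) ((q : ℕ) : ℤ) := by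
        simpa [st_apply_of_pos hq] using hasc
      have hsym := (hG.isDemazure (isAperm_mul_st hu hq) q hdesc).sw_eq
      rw [mul_assoc, st_mul_self hq, mul_one] at hsym
      refine ⟨_, neg_mem ?_, IsDemazure.of_sw_eq hsym⟩
      rw [toAx_βM]
      exact C_mul_mem _ (toAx_mem_grothSpan hu)
  | zero => exact ⟨0, zero_mem _, by simp [IsDemazure]⟩
  | add f f' _ _ ih ih' =>
    obtain ⟨g, hg, h⟩ := ih
    obtain ⟨g', hg', h'⟩ := ih'
    exact ⟨g + g', add_mem hg hg', h.add h'⟩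
  | smul a f _ ih =>
    obtain ⟨g, hg, h⟩ := ih
    exact ⟨a • g, Submodule.smul_mem _ a hg, h.smul a⟩

lemma mem_of_isDemazure (hG : GrothFamily G) {q : ℕ+} {f g : Ax} (hf : f ∈ grothSpan G)
    (h : IsDemazure q f g) : g ∈ grothSpan G := by
  obtain ⟨g', hg', h'⟩ := hG.exists_isDemazure q hf
  rwa [h.unique h']

lemma eq_prod_staircase (hG : GrothFamily G) {n : ℕ} {w : SPerm} (hw : IsRevA n w) :
    G w = ∏ p ∈ staircase n, boxFactor p :=
  hG.1 n w hw

lemma prod_trimmedStaircase_mem (hG : GrothFamily G) {N : ℕ} {T : Finset ℕ}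
    (hT : T ⊆ Finset.Icc 1 N) : toAx (∏ p ∈ trimmedStaircase N T, boxFactor p) ∈ grothSpan G := by
  induction T using Finset.induction_on_max with
  | empty =>
    rw [trimmedStaircase_empty, ← hG.eq_prod_staircase (isRevA_revP (N + 1))]
    exact toAx_mem_grothSpan (isRevA_revP _).1
  | insert a T hlt ih =>
    have ha : 1 ≤ a ∧ a ≤ N := by simpa using hT (Finset.mem_insert_self a T)
    have hprev := ih ((Finset.subset_insert a T).trans hT)
    rw [trimmedStaircase_eq_insert ha.1 ha.2 fun h => (hlt a h).false] at hprev
    lift a to ℕ+ using ha.1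
    exact hG.mem_of_isDemazure hprev (isDemazure_prod_boxFactor
      (swap_mem_trimmedStaircase_insert_iff a.pos fun h => by have := hlt _ h; omega)
      (notMem_trimmedStaircase_insert N a T))

lemma X_mul_prod_staircase_mem (hG : GrothFamily G) {N : ℕ} {s : ℕ+} (hs : (s : ℕ) ≤ N) :
    X s * toAx (∏ p ∈ staircase N, boxFactor p) ∈ grothSpan G := by
  have hP : toAx (∏ p ∈ staircase N, boxFactor p) ∈ grothSpan G := by
    rw [← hG.eq_prod_staircase (isRevA_revP N)]
    exact toAx_mem_grothSpan (isRevA_revP N).1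
  set P := toAx (∏ p ∈ staircase N, boxFactor p)
  obtain ⟨m, hm⟩ : ∃ m : ℕ+, (m : ℕ) = N + 1 - s := ⟨⟨N + 1 - s, by omega⟩, rfl⟩
  have hbox := hG.prod_trimmedStaircase_mem (Finset.erase_subset (s : ℕ) (Finset.Icc 1 N))
  rw [trimmedStaircase_erase s.pos hs, Finset.prod_insert (by simp only [mem_staircase]; omega),
    ← hm, map_mul] at hbox
  set u : Aloc := algebraMap Ry Aloc (1 + C Polynomial.X * X m)
  set y : Aloc := algebraMap Ry Aloc (X m)
  have hfac : toAx (boxFactor (s, m)) = C u * X s + C y := by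
    simp only [boxFactor, map_add, map_mul, map_one, toAx_xV, toAx_yV, toAx_βM, u, y]
    ring
  obtain ⟨v, hv⟩ := (IsLocalization.map_units Aloc
    (⟨_, Submonoid.subset_closure ⟨m, rfl⟩⟩ : Sy)).exists_left_inv
  have hv' : C v * C u = (1 : Ax) := by rw [← map_mul, hv, map_one]
  have hX : X s * P = C v * (toAx (boxFactor (s, m)) * P) - C v * (C y * P) := by
    rw [hfac]
    linear_combination (-(X s * P)) * hv'
  rw [hX]
  exact sub_mem (C_mul_mem _ hbox) (C_mul_mem _ (C_mul_mem _ hP))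

lemma X_mul_mem_of_isDemazure (hG : GrothFamily G) {N : ℕ} {q : ℕ+} (hqN : (q : ℕ) + 1 ≤ N)
    {f g : Ax} (hf : f ∈ grothSpan G) (hXf : ∀ s : ℕ+, (s : ℕ) ≤ N → X s * f ∈ grothSpan G)
    (h : IsDemazure q f g) {s : ℕ+} (hs : (s : ℕ) ≤ N) : X s * g ∈ grothSpan G := by
  have hcorr : (1 + toAx βM * X (q + 1)) * f ∈ grothSpan G := by
    rw [add_mul, one_mul, mul_assoc, toAx_βM]
    exact add_mem hf (C_mul_mem _ (hXf (q + 1) hqN))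
  by_cases hsq : s = q
  · rw [hsq]
    simpa using add_mem (hG.mem_of_isDemazure (hXf (q + 1) hqN) h.X_succ_mul) hcorr
  by_cases hsq1 : s = q + 1
  · rw [hsq1]
    simpa using sub_mem (hG.mem_of_isDemazure (hXf q (by omega)) h.X_mul) hcorr
  exact hG.mem_of_isDemazure (hXf s hs) (h.mul_left (sw_X_of_ne hsq hsq1))

lemma X_mul_toAx_mem (hG : GrothFamily G) {v : SPerm} (hv : IsAperm v) (s : ℕ+) :
    X s * toAx (G v) ∈ grothSpan G := by
  obtain ⟨N, hsN, hvN⟩ := hv.exists_isApermN s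
  refine hvN.induction_on_descent
    (P := fun u => ∀ s : ℕ+, (s : ℕ) ≤ N → X s * toAx (G u) ∈ grothSpan G)
    (fun w hw s hs => ?_) (fun u k hu hk hkN hdesc hPu s hs => ?_) s hsN
  · rw [hG.eq_prod_staircase hw]
    exact hG.X_mul_prod_staircase_mem hs
  · obtain ⟨q, rfl⟩ : ∃ q : ℕ+, ((q : ℕ) : ℤ) = k :=
      ⟨⟨k.toNat, by omega⟩, by simp only [PNat.mk_coe]; omega⟩
    exact hG.X_mul_mem_of_isDemazure (by omega) (toAx_mem_grothSpan hu.1) hPu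
      (hG.isDemazure hu.1 q hdesc) hs

lemma X_mul_mem (hG : GrothFamily G) (s : ℕ+) {f : Ax} (hf : f ∈ grothSpan G) :
    X s * f ∈ grothSpan G := by
  induction hf using Submodule.span_induction with
  | mem x hx =>
    obtain ⟨u, hu, rfl⟩ := hx
    exact hG.X_mul_toAx_mem hu s
  | zero => simp
  | add f f' _ _ ih ih' => simpa [mul_add] using add_mem ih ih'
  | smul a f _ ih => simpa [mul_smul_comm] using Submodule.smul_mem _ a ih

lemma one_mem (hG : GrothFamily G) : (1 : Ax) ∈ grothSpan G := by
  have h := toAx_mem_grothSpan (G := G) (isRevA_revP 0).1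
  rwa [hG.eq_prod_staircase (isRevA_revP 0), show staircase 0 = ∅ by decide,
    Finset.prod_empty, map_one] at h

end GrothFamily

end

/-- The `𝔸`-span of the double Grothendieck polynomials is
all of `𝔸[x]`, where `𝔸` is the localization of `ℤ[β][y]` at the elements
`1 + β yᵢ`. -/
theorem groth_span (G : SPerm → MvP) (hG : GrothFamily G) :
    Submodule.span Aloc {P : Ax | ∃ w : SPerm, IsAperm w ∧ P = toAx (G w)} = ⊤ := by
  change GrothSpan.grothSpan G = ⊤
  rw [eq_top_iff]
  rintro P -
  induction P using MvPolynomial.induction_on with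
  | C a => simpa [MvPolynomial.smul_eq_C_mul] using Submodule.smul_mem _ a hG.one_mem
  | add p p' hp hp' => exact add_mem hp hp'
  | mul_X p s hp => simpa [mul_comm] using hG.X_mul_mem s hp
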